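/- arXiv:2001.10760 — 2 statements merged into one kernel-verified Lean document; each statement's English description precedes it below -/
import Mathlib

section
/- The assignments ρ⁺_{z,r}(e₀) = (q^{-1}z/(q−q^{-1})) a†, ρ⁺_{z,r}(e₁) = (qz/(q−q^{-1})) a, ρ⁺_{z,r}(k₀) = r q^{2D}, ρ⁺_{z,r}(k₁) = r^{-1} q^{-2D} satisfy the defining relations of the Borel subalgebra U_q(b⁺) of quantum affine sl₂; in particular the quantum Serre relations [e_i,[e_i,[e_i,e_{σ(i)}]_{q²}]₁]_{q^{-2}} = 0 hold for i ∈ {0,1}. -/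
noncomputable section

open Finsupp Matrix

/-- The infinite-dimensional space `W = ⊕_{j≥0} ℂ w^j`. -/
abbrev Wsp : Type := ℕ →₀ ℂ

abbrev EndW : Type := Module.End ℂ Wsp

/-- The basis vector `w^j`. -/
def wv (j : ℕ) : Wsp := Finsupp.single j 1

/-- The linear operator on `W` determined by its values on the basis. -/
def mkOp (g : ℕ → Wsp) : EndW :=
  Finsupp.lsum ℂ fun j => LinearMap.toSpanSingleton ℂ Wsp (g j)

/-- The annihilation operator `a`. -/
def opA : EndW := mkOp fun j => match j with | 0 => 0 | i + 1 => wv i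

/-- The creation operator `a†`. -/
def opAdag (q : ℂ) : EndW := mkOp fun j => (1 - q ^ (2 * (j + 1))) • wv (j + 1)

/-- The diagonal operator `f(D)`. -/
def opDiag (f : ℕ → ℂ) : EndW := mkOp fun j => f j • wv j

/-- `ρ⁺_{z,r}(e₀)`. -/
def rhoE0 (q z : ℂ) : EndW := (q⁻¹ * z / (q - q⁻¹)) • opAdag q

/-- `ρ⁺_{z,r}(e₁)`. -/
def rhoE1 (q z : ℂ) : EndW := (q * z / (q - q⁻¹)) • opA

/-- `ρ⁺_{z,r}(k₀) = r q^{2D}`. -/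
def rhoK0 (q r : ℂ) : EndW := r • opDiag fun j => q ^ (2 * j)

/-- `ρ⁺_{z,r}(k₁) = r⁻¹ q^{-2D}`. -/
def rhoK1 (q r : ℂ) : EndW := r⁻¹ • opDiag fun j => (q ^ (2 * j))⁻¹

/-- The deformed commutator `[x,y]_p = xy - p yx`. -/
def pComm (p : ℂ) (x y : EndW) : EndW := x * y - p • (y * x)

/-! The `kᵢ` act diagonally and the `eᵢ` shift the degree by `±1`, so each `k`–`e` relation is the
statement that the diagonal entries form a geometric sequence of ratio `q^{±2}`. The operators `a`
and `a†` satisfy the `q`-oscillator relation `a a† = q² a† a + (1 - q²)`, and the Serre relations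
hold for any pair `x, y` in an algebra with `y x = p x y + c`: moving every `y` to the right turns
the Serre element into a combination of `x³ y` and `x²` whose coefficients vanish identically. -/

section SerreElement

variable {K A : Type*} [Field K] [Ring A] [Algebra K A]

def serreElement (p : K) (x y : A) : A :=
  x * x * x * y - (p + 1 + p⁻¹) • (x * x * y * x - x * y * x * x) - y * x * x * x

/- A copy of `pComm` over an arbitrary algebra: on `Module.End ℂ Wsp` the ring lemmas (`mul_sub`, …)
do not match the `LinearMap` subtraction that `pComm` is written with. -/
def qComm (p : K) (x y : A) : A := x * y - p • (y * x)

theorem qComm_serre {p : K} (hp : p ≠ 0) (x y : A) :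
    qComm p⁻¹ x (qComm (1 : K) x (qComm p x y)) = serreElement p x y := by
  simp only [qComm, serreElement, mul_sub, sub_mul, mul_smul_comm, smul_mul_assoc, one_smul,
    smul_sub, smul_smul, ← mul_assoc]
  match_scalars <;> field_simp <;> ring

theorem serreElement_inv (p : K) (x y : A) : serreElement p⁻¹ x y = serreElement p x y := by
  have h3 : p⁻¹ + 1 + p = p + 1 + p⁻¹ := by ring
  rw [serreElement, serreElement, inv_inv, h3]

theorem serreElement_eq_zero_of_mul_eq {p c : K} {x y : A} (hp : p ≠ 0)
    (h : y * x = p • (x * y) + c • 1) : serreElement p x y = 0 := by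
  have hyxx : y * x * x = p ^ 2 • (x * x * y) + ((p + 1) * c) • x := by
    rw [h, add_mul, smul_mul_assoc, mul_assoc, h]
    simp only [mul_add, mul_smul_comm, smul_add, smul_smul, smul_mul_assoc, one_mul,
      mul_one, ← mul_assoc]
    module
  have hyxxx : y * x * x * x = p ^ 3 • (x * x * x * y) + ((p ^ 2 + p + 1) * c) • (x * x) := by
    rw [hyxx, add_mul, smul_mul_assoc, smul_mul_assoc, mul_assoc (x * x), h]
    simp only [mul_add, mul_smul_comm, smul_add, smul_smul, mul_one, ← mul_assoc]
    module
  have hxxyx : x * x * y * x = p • (x * x * x * y) + c • (x * x) := by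
    rw [mul_assoc (x * x), h]
    simp only [mul_add, mul_smul_comm, mul_one, ← mul_assoc]
  have hxyxx : x * y * x * x = p ^ 2 • (x * x * x * y) + ((p + 1) * c) • (x * x) := by
    rw [mul_assoc x, mul_assoc x, hyxx]
    simp only [mul_add, mul_smul_comm, ← mul_assoc]
  rw [serreElement, hyxxx, hxxyx, hxyxx]
  match_scalars <;> field_simp <;> ring

theorem mul_eq_inv_smul_of_mul_eq {p c : K} {x y : A} (hp : p ≠ 0)
    (h : y * x = p • (x * y) + c • 1) : x * y = p⁻¹ • (y * x) + (-p⁻¹ * c) • 1 := by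
  rw [h, smul_add, smul_smul, inv_mul_cancel₀ hp, one_smul, smul_smul, neg_mul, neg_smul,
    add_neg_cancel_right]

theorem serreElement_swap_eq_zero_of_mul_eq {p c : K} {x y : A} (hp : p ≠ 0)
    (h : y * x = p • (x * y) + c • 1) : serreElement p y x = 0 := by
  rw [← serreElement_inv]
  exact serreElement_eq_zero_of_mul_eq (inv_ne_zero hp) (mul_eq_inv_smul_of_mul_eq hp h)

end SerreElement

theorem smul_mul_smul_of_mul_eq {R A : Type*} [CommSemiring R] [Semiring A] [Algebra R A]
    {p : R} {x y : A} (h : x * y = p • (y * x)) (a b : R) :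
    (a • x) * (b • y) = p • ((b • y) * (a • x)) := by
  rw [smul_mul_smul_comm, h, smul_mul_smul_comm, smul_comm, mul_comm]

theorem smul_mul_smul_of_mul_eq_add {R A : Type*} [CommSemiring R] [Semiring A] [Algebra R A]
    {p c : R} {x y : A} (h : y * x = p • (x * y) + c • 1) (a b : R) :
    (b • y) * (a • x) = p • ((a • x) * (b • y)) + (a * b * c) • 1 := by
  rw [smul_mul_smul_comm, h, smul_mul_smul_comm, smul_add, smul_smul, smul_smul, smul_smul,
    mul_comm b a, mul_comm p]

theorem EndW.ext {f g : EndW} (h : ∀ j, f (wv j) = g (wv j)) : f = g :=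
  Finsupp.lhom_ext' fun j => LinearMap.ext_ring (h j)

theorem mkOp_wv (g : ℕ → Wsp) (j : ℕ) : mkOp g (wv j) = g j := by
  simp [mkOp, wv]

@[simp] theorem opA_wv_zero : opA (wv 0) = 0 := mkOp_wv _ 0

@[simp] theorem opA_wv_succ (j : ℕ) : opA (wv (j + 1)) = wv j := mkOp_wv _ (j + 1)

@[simp] theorem opAdag_wv (q : ℂ) (j : ℕ) :
    opAdag q (wv j) = (1 - q ^ (2 * (j + 1))) • wv (j + 1) :=
  mkOp_wv _ j

@[simp] theorem opDiag_wv (f : ℕ → ℂ) (j : ℕ) : opDiag f (wv j) = f j • wv j := mkOp_wv _ j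

theorem opDiag_mul_opAdag {f : ℕ → ℂ} {p : ℂ} (hf : ∀ j, f (j + 1) = p * f j) (q : ℂ) :
    opDiag f * opAdag q = p • (opAdag q * opDiag f) := by
  refine EndW.ext fun j => ?_
  simp only [Module.End.mul_apply, LinearMap.smul_apply, map_smul, opAdag_wv, opDiag_wv, hf,
    smul_smul]
  ring_nf

theorem opDiag_mul_opA {f : ℕ → ℂ} {p : ℂ} (hf : ∀ j, f j = p * f (j + 1)) :
    opDiag f * opA = p • (opA * opDiag f) := by
  refine EndW.ext fun j => ?_
  cases j with
  | zero => simp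
  | succ j => simp only [Module.End.mul_apply, LinearMap.smul_apply, map_smul, opA_wv_succ,
      opDiag_wv, hf j, smul_smul]

theorem opDiag_commute (f g : ℕ → ℂ) : Commute (opDiag f) (opDiag g) := by
  refine EndW.ext fun j => ?_
  simp only [Module.End.mul_apply, map_smul, opDiag_wv, smul_smul, mul_comm]

theorem opA_mul_opAdag (q : ℂ) : opA * opAdag q = q ^ 2 • (opAdag q * opA) + (1 - q ^ 2) • 1 := by
  refine EndW.ext fun j => ?_
  cases j with
  | zero => simp
  | succ j =>
    simp only [Module.End.mul_apply, LinearMap.add_apply, LinearMap.smul_apply, map_smul,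
      opAdag_wv, opA_wv_succ, Module.End.one_apply, smul_smul, ← add_smul]
    ring_nf

theorem rhoE1_mul_rhoE0 (q z : ℂ) :
    rhoE1 q z * rhoE0 q z = q ^ 2 • (rhoE0 q z * rhoE1 q z) +
      (q⁻¹ * z / (q - q⁻¹) * (q * z / (q - q⁻¹)) * (1 - q ^ 2)) • 1 :=
  smul_mul_smul_of_mul_eq_add (opA_mul_opAdag q) _ _

theorem rho_plus_is_representation_general (q z r : ℂ) (hq0 : q ≠ 0) :
    rhoK0 q r * rhoE0 q z = q ^ 2 • (rhoE0 q z * rhoK0 q r) ∧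
    rhoK1 q r * rhoE1 q z = q ^ 2 • (rhoE1 q z * rhoK1 q r) ∧
    rhoK0 q r * rhoE1 q z = (q ^ 2)⁻¹ • (rhoE1 q z * rhoK0 q r) ∧
    rhoK1 q r * rhoE0 q z = (q ^ 2)⁻¹ • (rhoE0 q z * rhoK1 q r) ∧
    rhoK0 q r * rhoK1 q r = rhoK1 q r * rhoK0 q r ∧
    pComm (q ^ 2)⁻¹ (rhoE0 q z) (pComm 1 (rhoE0 q z) (pComm (q ^ 2) (rhoE0 q z) (rhoE1 q z))) = 0 ∧
    pComm (q ^ 2)⁻¹ (rhoE1 q z) (pComm 1 (rhoE1 q z) (pComm (q ^ 2) (rhoE1 q z) (rhoE0 q z))) = 0 := by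
  have hq2 : q ^ 2 ≠ 0 := pow_ne_zero 2 hq0
  refine ⟨smul_mul_smul_of_mul_eq (opDiag_mul_opAdag (fun j => by ring) q) _ _,
    smul_mul_smul_of_mul_eq (opDiag_mul_opA (fun j => by field_simp; ring)) _ _,
    smul_mul_smul_of_mul_eq (opDiag_mul_opA (fun j => by field_simp; ring)) _ _,
    smul_mul_smul_of_mul_eq (opDiag_mul_opAdag (fun j => by ring) q) _ _,
    (((opDiag_commute _ _).smul_left _).smul_right _).eq, ?_, ?_⟩
  · exact (qComm_serre hq2 _ _).trans
      (serreElement_eq_zero_of_mul_eq (A := EndW) hq2 (rhoE1_mul_rhoE0 q z))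
  · exact (qComm_serre hq2 _ _).trans
      (serreElement_swap_eq_zero_of_mul_eq (A := EndW) hq2 (rhoE1_mul_rhoE0 q z))

/-- the assignments `ρ⁺_{z,r}` satisfy the defining relations of `U_q(b⁺)`,
in particular the quantum Serre relations. -/
theorem rho_plus_is_representation (q z r : ℂ) (hq0 : q ≠ 0) (hq1 : q ≠ 1) (hqm1 : q ≠ -1)
    (hz : z ≠ 0) (hr : r ≠ 0) :
    rhoK0 q r * rhoE0 q z = q ^ 2 • (rhoE0 q z * rhoK0 q r) ∧
    rhoK1 q r * rhoE1 q z = q ^ 2 • (rhoE1 q z * rhoK1 q r) ∧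
    rhoK0 q r * rhoE1 q z = (q ^ 2)⁻¹ • (rhoE1 q z * rhoK0 q r) ∧
    rhoK1 q r * rhoE0 q z = (q ^ 2)⁻¹ • (rhoE0 q z * rhoK1 q r) ∧
    rhoK0 q r * rhoK1 q r = rhoK1 q r * rhoK0 q r ∧
    pComm (q ^ 2)⁻¹ (rhoE0 q z) (pComm 1 (rhoE0 q z) (pComm (q ^ 2) (rhoE0 q z) (rhoE1 q z))) = 0 ∧
    pComm (q ^ 2)⁻¹ (rhoE1 q z) (pComm 1 (rhoE1 q z) (pComm (q ^ 2) (rhoE1 q z) (rhoE0 q z))) = 0 :=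
  rho_plus_is_representation_general q z r hq0
end
end

section
/- (Factorization of Q eigenvalues) Suppose Q : ℂ → ℂ satisfies: Q(z) = f z^{2N'} ∏_{j=1}^{M'} (z² − y_j²) for some N', M' ≥ 0, f, y_j ∈ ℂ^×, and the crossing symmetry Q(q^{-1}z^{-1}) = (qz²)^{-2N} Q(z) for all z ∈ ℂ^×, where 0 < |q| < 1. Then M' = 2M is even, N' = N − M (so M ≤ N), and after relabeling, Q(z) = f z^{2(N−M)} ∏_{j=1}^M (z² − y_j²)(z² − q^{-2} y_j^{-2}). -/
/-!
With `S` the multiset of the `y_j²`, the crossing symmetry becomes, in `w = z²`, the polynomial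
identity `c₁ w^{2N} ∏_{s ∈ S} (w - q⁻²/s) = c₂ w^{2N'+M'} ∏_{s ∈ S} (w - s)`. Comparing roots and
leading coefficients gives `2N = 2N' + M'`, the invariance of `S` under the involution
`s ↦ q⁻²/s`, and `∏ S = q^{-M'}`. An invariant multiset splits into pairs `{s, q⁻²/s}` once each
fixed point `±q⁻¹` occurs an even number of times; each pair multiplies to `q⁻²`, so the value of
`∏ S` forces an even number of `-q⁻¹`, and the even cardinality then an even number of `q⁻¹`.
-/

namespace Multiset

variable {α : Type*}

theorem exists_eq_add_map_of_map_eq [DecidableEq α] {τ : α → α} (hτ : Function.Involutive τ)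
    (S : Multiset α) (hS : S.map τ = S) (hfix : ∀ x, τ x = x → Even (S.count x)) :
    ∃ T, S = T + T.map τ := by
  induction S using Multiset.strongInductionOn with
  | ih S ih =>
  rcases S.empty_or_exists_mem with rfl | ⟨a, ha⟩
  · exact ⟨0, by simp⟩
  have hτa : τ a ∈ S.erase a := by
    by_cases hfa : τ a = a
    · obtain ⟨k, hk⟩ := hfix a hfa
      have := count_pos.2 ha
      rw [hfa, ← count_pos, count_erase_self]
      omega
    · exact (mem_erase_of_ne hfa).2 (hS ▸ mem_map_of_mem τ ha)
  set S' := (S.erase a).erase (τ a)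
  have hS' : S = a ::ₘ τ a ::ₘ S' := by rw [cons_erase hτa, cons_erase ha]
  have hmap : S'.map τ = S' := by
    have := hS
    rw [hS', map_cons, map_cons, hτ a, cons_swap] at this
    exact (cons_inj_right _).1 ((cons_inj_right _).1 this)
  have hfix' : ∀ x, τ x = x → Even (S'.count x) := by
    intro x hx
    have := hfix x hx
    rw [hS', count_cons, count_cons] at this
    by_cases hax : x = a
    · subst hax
      simpa [hx, parity_simps] using this
    · have : x ≠ τ a := fun h => hax (by rw [← hx, h, hτ a])
      simp_all
  obtain ⟨T, hT⟩ := ih S' (hS' ▸ (lt_cons_self _ _).trans (lt_cons_self _ _)) hmap hfix'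
  exact ⟨a ::ₘ T, by rw [hS', hT]; simpa using cons_swap _ _ _⟩

theorem filter_map_eq_of_map_eq {τ : α → α} {S : Multiset α} (hS : S.map τ = S)
    (p : α → Prop) [DecidablePred p] (hp : ∀ a, p (τ a) ↔ p a) :
    (S.filter p).map τ = S.filter p := by
  calc (S.filter p).map τ = (S.filter (p ∘ τ)).map τ := by
        rw [filter_congr fun a _ => (hp a).symm]; rfl
    _ = S.filter p := by rw [← filter_map, hS]

theorem exists_eq_map_univ_val {s : Multiset α} {n : ℕ} (h : card s = n) :
    ∃ g : Fin n → α, s = Finset.univ.val.map g := by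
  subst h
  refine ⟨fun i => s.toList.get (Fin.cast (length_toList s).symm i), ?_⟩
  rw [Fin.univ_val_map, ← List.ofFn_congr, List.ofFn_get, coe_toList]
  exact length_toList s

end Multiset

open Multiset Polynomial

section Field

variable {K : Type*} [Field K]

theorem involutive_const_mul_inv {c : K} (hc : c ≠ 0) : Function.Involutive fun a : K => c * a⁻¹ := by
  intro a
  change c * (c * a⁻¹)⁻¹ = a
  rw [mul_inv, inv_inv, mul_inv_cancel_left₀ hc]

theorem prod_add_map_mul_inv (c : K) {T : Multiset K} (hT : 0 ∉ T) :
    (T + T.map fun a => c * a⁻¹).prod = c ^ card T := by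
  have hpair : (T.map fun a => a * (c * a⁻¹)) = T.map fun _ => c :=
    map_congr rfl fun a ha => by field_simp [ne_of_mem_of_not_mem ha hT]
  calc (T + T.map fun a => c * a⁻¹).prod = (T.map fun a => a * (c * a⁻¹)).prod := by
        rw [prod_map_mul (f := fun a => a), map_id', prod_add]
    _ = c ^ card T := by rw [hpair, map_const', prod_replicate]

theorem even_count_of_map_mul_inv_eq [DecidableEq K] (hK : ringChar K ≠ 2) {c : K} (hc : c ≠ 0)
    {S : Multiset K} {M : ℕ} (h0 : 0 ∉ S) (hS : S.map (fun a => c * a⁻¹) = S)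
    (hcard : card S = 2 * M) (hprod : S.prod = c ^ M) {x : K} (hx : c * x⁻¹ = x) :
    Even (S.count x) := by
  by_cases hx0 : x = 0
  · simp [hx0, count_eq_zero.2 h0]
  have hτ := involutive_const_mul_inv hc
  have hsq : ∀ a ≠ 0, c * a⁻¹ = a → a * a = c :=
    fun a ha hfa => (eq_mul_inv_iff_mul_eq₀ ha).1 hfa.symm
  obtain ⟨T, hT⟩ := exists_eq_add_map_of_map_eq hτ (S.filter fun a => ¬c * a⁻¹ = a)
    (filter_map_eq_of_map_eq hS _ fun a => by
      rw [show c * (c * a⁻¹)⁻¹ = a from hτ a, eq_comm])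
    (fun y hy => by simp [hy])
  have hT0 : 0 ∉ T := fun h => h0 (mem_of_mem_filter (hT ▸ mem_add.2 (Or.inl h)))
  set F := S.filter fun a => c * a⁻¹ = a with hFdef
  set m := S.count x
  set k := card (F.filter fun a => ¬a = x)
  have hF : F = replicate m x + replicate k (-x) := by
    conv_lhs => rw [← filter_add_not (· = x) F]
    congr 1
    · rw [filter_eq', hFdef, count_filter_of_pos (p := fun a => c * a⁻¹ = a) hx]
    · refine eq_replicate_card.2 fun b hb => ?_
      obtain ⟨hbF, hbx⟩ := mem_filter.1 hb
      obtain ⟨hbS, hb⟩ := mem_filter.1 hbF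
      have := hsq b (ne_of_mem_of_not_mem hbS h0) hb
      rw [← hsq x hx0 hx] at this
      exact (mul_self_eq_mul_self_iff.1 this).resolve_left hbx
  have hsplit : S = replicate m x + replicate k (-x) + (T + T.map fun a => c * a⁻¹) := by
    rw [← hF, ← hT, filter_add_not]
  obtain ⟨j, hj, hM⟩ : ∃ j, m + k = 2 * j ∧ M = j + card T := by
    have := congrArg card hsplit
    simp only [card_add, card_replicate, card_map, hcard] at this
    exact ⟨M - card T, by omega, by omega⟩
  have hsign : (-1 : K) ^ k * c ^ M = c ^ M := by
    calc (-1 : K) ^ k * c ^ M = (-1) ^ k * (x * x) ^ j * c ^ card T := by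
          rw [hM, hsq x hx0 hx, pow_add, mul_assoc]
      _ = x ^ m * (-x) ^ k * c ^ card T := by
          rw [← pow_two, ← pow_mul, ← hj]; ring
      _ = c ^ M := by
          rw [← hprod, hsplit, prod_add, prod_add, prod_replicate, prod_replicate,
            prod_add_map_mul_inv c hT0]
  have hk : Even k := (neg_one_pow_eq_one_iff_even (Ring.neg_one_ne_one_of_char_ne_two hK)).1
    (mul_right_cancel₀ (pow_ne_zero M hc) (hsign.trans (one_mul _).symm))
  obtain ⟨k', hk'⟩ := hk
  exact ⟨j - k', by omega⟩

theorem exists_eq_add_map_mul_inv (hK : ringChar K ≠ 2) {c : K} (hc : c ≠ 0) {S : Multiset K}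
    {M : ℕ} (h0 : 0 ∉ S) (hS : S.map (fun a => c * a⁻¹) = S) (hcard : card S = 2 * M)
    (hprod : S.prod = c ^ M) :
    ∃ T, card T = M ∧ S = T + T.map fun a => c * a⁻¹ := by
  classical
  obtain ⟨T, hT⟩ := exists_eq_add_map_of_map_eq (involutive_const_mul_inv hc) S hS
    fun x hx => even_count_of_map_mul_inv_eq hK hc h0 hS hcard hprod hx
  refine ⟨T, ?_, hT⟩
  have := congrArg card hT
  simp only [card_add, card_map, hcard] at this
  omega

theorem prod_map_mul_inv_sub (c : K) {w : K} (hw : w ≠ 0) {S : Multiset K} (hS : 0 ∉ S) :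
    (S.map fun s => c * w⁻¹ - s).prod =
      (-1) ^ card S * S.prod * w⁻¹ ^ card S * (S.map fun s => w - c * s⁻¹).prod := by
  induction S using Multiset.induction_on with
  | empty => simp
  | cons a S ih =>
    rw [mem_cons, not_or] at hS
    have ha : a ≠ 0 := Ne.symm hS.1
    simp only [map_cons, prod_cons, card_cons, pow_succ, ih hS.2]
    field_simp
    ring

end Field

theorem C_mul_X_pow_mul_prod_X_sub_C_inj {R : Type*} [CommRing R] [IsDomain R] {a b : R}
    {m n : ℕ} {s t : Multiset R} (ha : a ≠ 0) (hs : 0 ∉ s) (ht : 0 ∉ t)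
    (h : C a * X ^ m * (s.map fun r => X - C r).prod =
      C b * X ^ n * (t.map fun r => X - C r).prod) :
    a = b ∧ m = n ∧ s = t := by
  classical
  have hX : ∀ k (u : Multiset R), X ^ k * (u.map fun r => X - C r).prod =
      ((replicate k 0 + u).map fun r => X - C r).prod := by
    intro k u
    simp [prod_replicate]
  have hmonic : ∀ u : Multiset R, Monic (u.map fun r => X - C r).prod :=
    fun u => monic_multiset_prod_of_monic _ _ fun r _ => monic_X_sub_C r
  rw [mul_assoc, mul_assoc, hX, hX] at h
  have hab : a = b := by
    simpa [(hmonic _).leadingCoeff] using congrArg leadingCoeff h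
  subst hab
  have hroots := congrArg roots h
  rw [roots_C_mul _ ha, roots_C_mul _ ha, roots_multiset_prod_X_sub_C,
    roots_multiset_prod_X_sub_C] at hroots
  have hmn : m = n := by
    simpa [count_eq_zero.2 hs, count_eq_zero.2 ht] using congrArg (count 0) hroots
  subst hmn
  exact ⟨rfl, rfl, add_left_cancel hroots⟩

theorem crossing_symmetry_polynomial_identity (N N' : ℕ) {q f : ℂ} (hq : q ≠ 0) {Q : ℂ → ℂ}
    {S : Multiset ℂ} (hS : 0 ∉ S)
    (hQ : ∀ z, Q z = f * z ^ (2 * N') * (S.map fun s => z ^ 2 - s).prod)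
    (hcross : ∀ z : ℂ, z ≠ 0 → Q (q⁻¹ * z⁻¹) = ((q * z ^ 2) ^ (2 * N))⁻¹ * Q z) :
    C (f * (-1) ^ card S * S.prod * q ^ (2 * N)) * X ^ (2 * N) *
        ((S.map fun s => q⁻¹ ^ 2 * s⁻¹).map fun r => X - C r).prod =
      C (f * q ^ (2 * N')) * X ^ (2 * N' + card S) * (S.map fun r => X - C r).prod := by
  have hsq : ∀ z ≠ 0, f * (-1) ^ card S * S.prod * q ^ (2 * N) * (z ^ 2) ^ (2 * N) *
        (S.map fun s => z ^ 2 - q⁻¹ ^ 2 * s⁻¹).prod =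
      f * q ^ (2 * N') * (z ^ 2) ^ (2 * N' + card S) * (S.map fun s => z ^ 2 - s).prod := by
    intro z hz
    have h := hcross z hz
    rw [hQ, hQ, show (q⁻¹ * z⁻¹) ^ 2 = q⁻¹ ^ 2 * (z ^ 2)⁻¹ by ring,
      prod_map_mul_inv_sub _ (pow_ne_zero 2 hz) hS] at h
    set A := (S.map fun s => z ^ 2 - q⁻¹ ^ 2 * s⁻¹).prod
    set B := (S.map fun s => z ^ 2 - s).prod
    simp only [mul_pow, inv_pow, ← pow_mul] at h ⊢
    field_simp at h ⊢
    linear_combination h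
  refine eq_of_infinite_eval_eq _ _ ((Set.finite_singleton 0).infinite_compl.mono fun w hw => ?_)
  obtain ⟨z, rfl⟩ := IsAlgClosed.exists_pow_nat_eq w two_pos
  have hz : z ≠ 0 := fun h => hw (by simp [h])
  simpa [eval_multiset_prod, Function.comp_def] using hsq z hz

theorem crossing_symmetry_roots (N N' : ℕ) {q f : ℂ} (hq : q ≠ 0) (hf : f ≠ 0) {Q : ℂ → ℂ}
    {S : Multiset ℂ} (hS : 0 ∉ S)
    (hQ : ∀ z, Q z = f * z ^ (2 * N') * (S.map fun s => z ^ 2 - s).prod)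
    (hcross : ∀ z : ℂ, z ≠ 0 → Q (q⁻¹ * z⁻¹) = ((q * z ^ 2) ^ (2 * N))⁻¹ * Q z) :
    ∃ M, card S = 2 * M ∧ N = N' + M ∧ S.map (fun s => q⁻¹ ^ 2 * s⁻¹) = S ∧
      S.prod = (q⁻¹ ^ 2) ^ M := by
  obtain ⟨hlead, hdeg, hinv⟩ := C_mul_X_pow_mul_prod_X_sub_C_inj (by simp [hf, hq, hS])
    (by simp [hS, hq]) hS (crossing_symmetry_polynomial_identity N N' hq hS hQ hcross)
  obtain ⟨M, hM⟩ : ∃ M, card S = 2 * M := ⟨N - N', by omega⟩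
  refine ⟨M, hM, by omega, hinv, ?_⟩
  rw [hdeg, hM, pow_mul, neg_one_sq, one_pow, mul_one, pow_add, pow_mul] at hlead
  have h1 : S.prod * (q ^ 2) ^ M = 1 :=
    mul_left_cancel₀ (mul_ne_zero hf (pow_ne_zero (2 * N') hq)) (by linear_combination hlead)
  rw [inv_pow, inv_pow]
  exact eq_inv_of_mul_eq_one_left h1

theorem Q_eigenvalue_factorization_general (N : ℕ) (q : ℂ)
    (hq0 : 0 < ‖q‖)
    (Q : ℂ → ℂ) (N' M' : ℕ) (f : ℂ) (y : Fin M' → ℂ)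
    (hf : f ≠ 0) (hy : ∀ j, y j ≠ 0)
    (hQ : ∀ z : ℂ, Q z = f * z ^ (2 * N') * ∏ j, (z ^ 2 - (y j) ^ 2))
    (hcross : ∀ z : ℂ, z ≠ 0 →
      Q (q⁻¹ * z⁻¹) = ((q * z ^ 2) ^ (2 * N))⁻¹ * Q z) :
    ∃ M : ℕ, M' = 2 * M ∧ M ≤ N ∧ N' = N - M ∧
      ∃ y' : Fin M → ℂ, (∀ j, y' j ≠ 0) ∧
        ∀ z : ℂ, Q z = f * z ^ (2 * (N - M)) *
          ∏ j, ((z ^ 2 - (y' j) ^ 2) * (z ^ 2 - (q⁻¹) ^ 2 * ((y' j)⁻¹) ^ 2)) := by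
  have hq : q ≠ 0 := norm_pos_iff.1 hq0
  set S := Finset.univ.val.map fun j => y j ^ 2
  have hS0 : 0 ∉ S := by simp [S, hy]
  have hQS : ∀ z, Q z = f * z ^ (2 * N') * (S.map fun s => z ^ 2 - s).prod := by
    simp [S, hQ, Finset.prod_eq_multiset_prod, Function.comp_def]
  obtain ⟨M, hcard, hN, hinv, hprod⟩ := crossing_symmetry_roots N N' hq hf hS0 hQS hcross
  obtain ⟨T, hTcard, hT⟩ := exists_eq_add_map_mul_inv (by simp [ringChar.eq_zero])
    (by simpa using hq) hS0 hinv hcard hprod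
  obtain ⟨g, rfl⟩ := exists_eq_map_univ_val hTcard
  choose r hr using fun j => IsAlgClosed.exists_pow_nat_eq (g j) two_pos
  obtain rfl : g = fun j => r j ^ 2 := funext fun j => (hr j).symm
  refine ⟨M, by simpa [S] using hcard, by omega, by omega, r, fun j hj => hS0 ?_, fun z => ?_⟩
  · rw [hT]
    exact mem_add.2 (Or.inl (mem_map.2 ⟨j, Finset.mem_univ j, by simp [hj]⟩))
  · rw [hQS, hT, show N' = N - M by omega]
    simp only [Multiset.map_add, prod_add, Multiset.map_map, Function.comp_def,
      Finset.prod_eq_multiset_prod, prod_map_mul, inv_pow]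

/-- factorization of Q eigenvalues.  If `Q(z) = f z^{2N'} ∏_j (z² - y_j²)`
with nonzero data and `Q` satisfies the crossing symmetry
`Q(q⁻¹z⁻¹) = (qz²)^{-2N} Q(z)` for `0 < |q| < 1`, then `M' = 2M` is even, `N' = N - M`
(so `M ≤ N`), and after relabeling
`Q(z) = f z^{2(N-M)} ∏_{j=1}^M (z² - y_j²)(z² - q⁻² y_j⁻²)`. -/
theorem Q_eigenvalue_factorization (N : ℕ) (q : ℂ)
    (hq0 : 0 < ‖q‖) (hq1 : ‖q‖ < 1)
    (Q : ℂ → ℂ) (N' M' : ℕ) (f : ℂ) (y : Fin M' → ℂ)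
    (hf : f ≠ 0) (hy : ∀ j, y j ≠ 0)
    (hQ : ∀ z : ℂ, Q z = f * z ^ (2 * N') * ∏ j, (z ^ 2 - (y j) ^ 2))
    (hcross : ∀ z : ℂ, z ≠ 0 →
      Q (q⁻¹ * z⁻¹) = ((q * z ^ 2) ^ (2 * N))⁻¹ * Q z) :
    ∃ M : ℕ, M' = 2 * M ∧ M ≤ N ∧ N' = N - M ∧
      ∃ y' : Fin M → ℂ, (∀ j, y' j ≠ 0) ∧
        ∀ z : ℂ, Q z = f * z ^ (2 * (N - M)) *
          ∏ j, ((z ^ 2 - (y' j) ^ 2) * (z ^ 2 - (q⁻¹) ^ 2 * ((y' j)⁻¹) ^ 2)) :=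
  Q_eigenvalue_factorization_general N q hq0 Q N' M' f y hf hy hQ hcross
end
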